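/- arXiv:1111.5473 — 7 statements merged into one kernel-verified Lean document; each statement's English description precedes it below -/
import Mathlib

section
/- Let y ∈ Las_t(K) and let I ⊆ [n] with |I| ≤ t. If K ∩ {x ∈ ℝ^n : x_i = 1 for all i ∈ I} = ∅, then y_I = 0. -/
/-!
Diagonal entries of a positive semidefinite matrix are nonnegative, so `y_I ≥ 0`. If `y_I > 0`,
condition `y` on the event "`x_i = 1` for all `i ∈ I`": the point `x_j = y_{I ∪ {j}} / y_I`
has `x_i = 1` on `I`, and the diagonal entry at `I` of the `ℓ`-th shifted moment matrix,
divided by `y_I`, is exactly the slack of the `ℓ`-th constraint at `x`. So `x ∈ K`,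
contradicting infeasibility.
-/

open Finset

/-- Membership in the polyhedron `K = {x : A x ≥ b}`. -/
def memK {n m : ℕ} (A : Matrix (Fin m) (Fin n) ℝ) (b : Fin m → ℝ) (x : Fin n → ℝ) : Prop :=
  ∀ ℓ : Fin m, b ℓ ≤ ∑ i, A ℓ i * x i

/-- The moment matrix of a vector `y` indexed by subsets, truncated at sets of size `≤ t`. -/
def momentMatrix {α : Type*} [Fintype α] [DecidableEq α] (y : Finset α → ℝ) (t : ℕ) :
    Matrix {I : Finset α // I.card ≤ t} {I : Finset α // I.card ≤ t} ℝ :=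
  fun I J => y (I.1 ∪ J.1)

/-- The shift operator `(a;β) * y` for a linear constraint `aᵀx ≥ β`. -/
def shiftVec {α ι : Type*} [Fintype α] [DecidableEq α]
    (A : ι → α → ℝ) (b : ι → ℝ) (ℓ : ι) (y : Finset α → ℝ) : Finset α → ℝ :=
  fun I => (∑ i, A ℓ i * y (insert i I)) - b ℓ * y I

/-- `y ∈ Las_t(K)` where `K = {x : A x ≥ b}`: `y_∅ = 1`, the moment matrix truncated at
sets of size `≤ t+1` is PSD, and each shifted moment matrix truncated at sets of size
`≤ t` is PSD. -/
def IsLasserre {α ι : Type*} [Fintype α] [DecidableEq α]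
    (A : ι → α → ℝ) (b : ι → ℝ) (t : ℕ) (y : Finset α → ℝ) : Prop :=
  y ∅ = 1 ∧ (momentMatrix y (t + 1)).PosSemidef ∧
    ∀ ℓ : ι, (momentMatrix (shiftVec A b ℓ y) t).PosSemidef

lemma momentMatrix_nonneg_of_posSemidef {α : Type*} [Fintype α] [DecidableEq α]
    {y : Finset α → ℝ} {t : ℕ} (h : (momentMatrix y t).PosSemidef) {I : Finset α}
    (hI : I.card ≤ t) : 0 ≤ y I := by
  simpa [momentMatrix] using h.diag_nonneg (i := ⟨I, hI⟩)

/-- The pseudo-expectation of `x` conditioned on `x_i = 1` for all `i ∈ I`. -/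
noncomputable def condPoint {α : Type*} [DecidableEq α] (y : Finset α → ℝ) (I : Finset α) :
    α → ℝ :=
  fun j => y (insert j I) / y I

lemma condPoint_eq_one_of_mem {α : Type*} [DecidableEq α] {y : Finset α → ℝ} {I : Finset α}
    (hy : y I ≠ 0) {i : α} (hi : i ∈ I) : condPoint y I i = 1 := by
  rw [condPoint, insert_eq_self.mpr hi, div_self hy]

lemma memK_condPoint {n m : ℕ} {A : Matrix (Fin m) (Fin n) ℝ} {b : Fin m → ℝ}
    {y : Finset (Fin n) → ℝ} {I : Finset (Fin n)} (hpos : 0 < y I)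
    (hshift : ∀ ℓ, 0 ≤ shiftVec (fun ℓ i => A ℓ i) b ℓ y I) : memK A b (condPoint y I) := by
  intro ℓ
  have hslack : b ℓ * y I ≤ ∑ i, A ℓ i * y (insert i I) := by
    simpa only [shiftVec, sub_nonneg] using hshift ℓ
  calc b ℓ = b ℓ * y I / y I := by field_simp
    _ ≤ (∑ i, A ℓ i * y (insert i I)) / y I := by gcongr
    _ = ∑ i, A ℓ i * condPoint y I i := by simp only [condPoint, sum_div, mul_div_assoc]

/-- If `y ∈ Las_t(K)`, `|I| ≤ t` and `K ∩ {x : x_i = 1 ∀ i ∈ I} = ∅`, then `y_I = 0`. -/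
theorem lasserre_infeasible_zero (n m t : ℕ) (A : Matrix (Fin m) (Fin n) ℝ) (b : Fin m → ℝ)
    (y : Finset (Fin n) → ℝ) (hy : IsLasserre (fun ℓ i => A ℓ i) b t y)
    (I : Finset (Fin n)) (hI : I.card ≤ t)
    (hK : ¬ ∃ x : Fin n → ℝ, memK A b x ∧ ∀ i ∈ I, x i = 1) :
    y I = 0 := by
  obtain ⟨-, hM, hS⟩ := hy
  have hnonneg : 0 ≤ y I := momentMatrix_nonneg_of_posSemidef hM (hI.trans t.le_succ)
  by_contra hne
  have hpos : 0 < y I := lt_of_le_of_ne hnonneg (Ne.symm hne)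
  exact hK ⟨condPoint y I,
    memK_condPoint hpos fun ℓ => momentMatrix_nonneg_of_posSemidef (hS ℓ) hI,
    fun _ hi => condPoint_eq_one_of_mem hne hi⟩
end

section
/- Let y ∈ Las_t(K) and S ⊆ [n] with |S| ≤ t. Then there exist finitely many vectors z^{(1)}, …, z^{(N)} ∈ Las_{t−|S|}(K) with z^{(j)}_{\{i\}} ∈ {0,1} for all i ∈ S and all j, and coefficients λ_1, …, λ_N ≥ 0 with Σ_j λ_j = 1, such that y_J = Σ_j λ_j · z^{(j)}_J for every subset J ⊆ [n] with |J| ≤ 2(t−|S|)+2. (Local consistency: the truncation of y is a convex combination of level-(t−|S|) Lasserre solutions that are integral on S.) -/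
open Finset

/-!
Conditioning on a variable `i` splits a level-`(t+1)` vector `y` into the unnormalized vectors
`y_{I ∪ {i}}` and `y_I - y_{I ∪ {i}}`. They sum to `y`, and they are level-`t` vectors up to
scaling, because their moment matrices and shifted moment matrices are principal submatrices,
resp. congruence transforms, of those of `y`. Conditioning in turn on every element of `S` gives
`2^|S|` vectors that are integral on `S`. Integrality is preserved because in a PSD matrix a zero
diagonal entry forces its whole row to vanish. Normalizing each vector by its value at `∅` gives
the convex combination. A vector whose value at `∅` is `0` vanishes on every set of size at most
`2(t - |S|) + 2`, for the same reason, so it can be dropped.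
-/

namespace Matrix.PosSemidef

open scoped ComplexOrder in
theorem apply_eq_zero_of_diag_eq_zero {𝕜 n : Type*} [RCLike 𝕜] [Fintype n] {M : Matrix n n 𝕜}
    (hM : M.PosSemidef) {a : n} (ha : M a a = 0) (b : n) : M a b = 0 := by
  classical
  have hcol : M *ᵥ Pi.single a 1 = 0 :=
    (hM.dotProduct_mulVec_zero_iff _).mp (by simpa [mulVec_single_one] using ha)
  have hba : M b a = 0 := by simpa [mulVec_single_one] using congrFun hcol b
  rw [← hM.1.apply a b, hba, star_zero]

theorem sub_submatrix {R m n : Type*} [CommRing R] [PartialOrder R] [StarRing R]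
    [Fintype m] [Fintype n] {M : Matrix n n R} (hM : M.PosSemidef) (f g : m → n) :
    (M.submatrix f f - M.submatrix f g - M.submatrix g f + M.submatrix g g).PosSemidef := by
  classical
  convert hM.conjTranspose_mul_mul_same
    ((1 : Matrix n n R).submatrix id f - (1 : Matrix n n R).submatrix id g) using 1
  ext p q
  simp only [add_apply, sub_apply, submatrix_apply, conjTranspose_sub, conjTranspose_submatrix,
    conjTranspose_one, Matrix.sub_mul, mul_apply, one_apply, id_eq, ite_mul, one_mul, zero_mul,
    Finset.sum_ite_eq, Finset.mem_univ, ↓reduceIte, mul_sub, mul_ite, mul_one, mul_zero,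
    Finset.sum_sub_distrib, Finset.sum_ite_eq']
  ring

end Matrix.PosSemidef

section Conditioning

variable {α ι : Type*} [DecidableEq α]

-- Conditioning on `x_i = 1` resp. `x_i = 0`, without dividing by `y_{i}` resp. `1 - y_{i}`.
def condOne (i : α) (w : Finset α → ℝ) : Finset α → ℝ :=
  fun I => w (insert i I)

def condZero (i : α) (w : Finset α → ℝ) : Finset α → ℝ :=
  w - condOne i w

theorem condOne_add_condZero (i : α) (w : Finset α → ℝ) : condOne i w + condZero i w = w :=
  add_sub_cancel _ _

variable [Fintype α]

def liftCard (t : ℕ) (I : {I : Finset α // I.card ≤ t}) : {I : Finset α // I.card ≤ t + 1} :=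
  ⟨I.1, I.2.trans t.le_succ⟩

def insertCard (i : α) (t : ℕ) (I : {I : Finset α // I.card ≤ t}) :
    {I : Finset α // I.card ≤ t + 1} :=
  ⟨insert i I.1, (card_insert_le _ _).trans (Nat.succ_le_succ I.2)⟩

theorem momentMatrix_condOne (i : α) (w : Finset α → ℝ) (t : ℕ) :
    momentMatrix (condOne i w) t =
      (momentMatrix w (t + 1)).submatrix (insertCard i t) (insertCard i t) := by
  ext I J
  simp [momentMatrix, condOne, insertCard, insert_union, union_insert]

theorem momentMatrix_condZero (i : α) (w : Finset α → ℝ) (t : ℕ) :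
    momentMatrix (condZero i w) t =
      let M := momentMatrix w (t + 1)
      M.submatrix (liftCard t) (liftCard t) - M.submatrix (liftCard t) (insertCard i t) -
        M.submatrix (insertCard i t) (liftCard t) +
        M.submatrix (insertCard i t) (insertCard i t) := by
  ext I J
  simp only [momentMatrix, condZero, condOne, liftCard, insertCard, Matrix.add_apply,
    Matrix.sub_apply, Matrix.submatrix_apply, Pi.sub_apply, insert_union, union_insert,
    insert_idem]
  ring

theorem posSemidef_momentMatrix_condOne {w : Finset α → ℝ} {t : ℕ}
    (h : (momentMatrix w (t + 1)).PosSemidef) (i : α) :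
    (momentMatrix (condOne i w) t).PosSemidef :=
  momentMatrix_condOne i w t ▸ h.submatrix _

theorem posSemidef_momentMatrix_condZero {w : Finset α → ℝ} {t : ℕ}
    (h : (momentMatrix w (t + 1)).PosSemidef) (i : α) :
    (momentMatrix (condZero i w) t).PosSemidef :=
  momentMatrix_condZero i w t ▸ h.sub_submatrix _ _

theorem shiftVec_condOne (A : ι → α → ℝ) (b : ι → ℝ) (ℓ : ι) (i : α) (w : Finset α → ℝ) :
    shiftVec A b ℓ (condOne i w) = condOne i (shiftVec A b ℓ w) := by
  ext I
  simp only [shiftVec, condOne, insert_comm i]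

theorem shiftVec_sub (A : ι → α → ℝ) (b : ι → ℝ) (ℓ : ι) (v w : Finset α → ℝ) :
    shiftVec A b ℓ (v - w) = shiftVec A b ℓ v - shiftVec A b ℓ w := by
  ext I
  simp only [shiftVec, Pi.sub_apply, mul_sub, sum_sub_distrib]
  ring

theorem shiftVec_condZero (A : ι → α → ℝ) (b : ι → ℝ) (ℓ : ι) (i : α) (w : Finset α → ℝ) :
    shiftVec A b ℓ (condZero i w) = condZero i (shiftVec A b ℓ w) := by
  rw [condZero, shiftVec_sub, shiftVec_condOne, condZero]

theorem shiftVec_smul (A : ι → α → ℝ) (b : ι → ℝ) (ℓ : ι) (c : ℝ) (w : Finset α → ℝ) :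
    shiftVec A b ℓ (c • w) = c • shiftVec A b ℓ w := by
  ext I
  simp only [shiftVec, Pi.smul_apply, smul_eq_mul, mul_sub, mul_sum]
  congr 1
  · exact sum_congr rfl fun _ _ => by ring
  · ring

theorem momentMatrix_smul (c : ℝ) (w : Finset α → ℝ) (t : ℕ) :
    momentMatrix (c • w) t = c • momentMatrix w t :=
  rfl

end Conditioning

section Cone

variable {α ι : Type*} [Fintype α] [DecidableEq α] {A : ι → α → ℝ} {b : ι → ℝ} {t : ℕ}
  {w : Finset α → ℝ}

def IsLasserreCone (A : ι → α → ℝ) (b : ι → ℝ) (t : ℕ) (w : Finset α → ℝ) : Prop :=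
  (momentMatrix w (t + 1)).PosSemidef ∧ ∀ ℓ : ι, (momentMatrix (shiftVec A b ℓ w) t).PosSemidef

theorem isLasserre_iff : IsLasserre A b t w ↔ w ∅ = 1 ∧ IsLasserreCone A b t w :=
  Iff.rfl

theorem IsLasserreCone.condOne (h : IsLasserreCone A b (t + 1) w) (i : α) :
    IsLasserreCone A b t (condOne i w) :=
  ⟨posSemidef_momentMatrix_condOne h.1 i, fun ℓ =>
    shiftVec_condOne A b ℓ i w ▸ posSemidef_momentMatrix_condOne (h.2 ℓ) i⟩

theorem IsLasserreCone.condZero (h : IsLasserreCone A b (t + 1) w) (i : α) :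
    IsLasserreCone A b t (condZero i w) :=
  ⟨posSemidef_momentMatrix_condZero h.1 i, fun ℓ =>
    shiftVec_condZero A b ℓ i w ▸ posSemidef_momentMatrix_condZero (h.2 ℓ) i⟩

theorem IsLasserreCone.smul (h : IsLasserreCone A b t w) {c : ℝ} (hc : 0 ≤ c) :
    IsLasserreCone A b t (c • w) := by
  refine ⟨?_, fun ℓ => ?_⟩
  · rw [momentMatrix_smul]
    exact h.1.smul hc
  · rw [shiftVec_smul, momentMatrix_smul]
    exact (h.2 ℓ).smul hc

theorem IsLasserreCone.empty_nonneg (h : IsLasserreCone A b t w) : 0 ≤ w ∅ := by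
  simpa [momentMatrix] using h.1.diag_nonneg (i := ⟨∅, by simp⟩)

theorem IsLasserreCone.isLasserre_inv_smul (h : IsLasserreCone A b t w) (h0 : w ∅ ≠ 0) :
    IsLasserre A b t ((w ∅)⁻¹ • w) :=
  ⟨inv_mul_cancel₀ h0, h.smul (inv_nonneg.mpr h.empty_nonneg)⟩

end Cone

section Vanishing

variable {α : Type*} [Fintype α] [DecidableEq α] {w : Finset α → ℝ} {s : ℕ}

theorem momentMatrix_union_eq_zero (h : (momentMatrix w s).PosSemidef) {I J : Finset α}
    (hI : I.card ≤ s) (hJ : J.card ≤ s) (h0 : w I = 0) : w (I ∪ J) = 0 :=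
  h.apply_eq_zero_of_diag_eq_zero (a := ⟨I, hI⟩) (by simpa [momentMatrix] using h0) ⟨J, hJ⟩

theorem eq_zero_of_empty_eq_zero (h : (momentMatrix w s).PosSemidef) (h0 : w ∅ = 0)
    {K : Finset α} (hK : K.card ≤ 2 * s) : w K = 0 := by
  obtain ⟨K₁, hK₁, hcard⟩ := exists_subset_card_eq (min_le_right s K.card)
  have hK₁s : K₁.card ≤ s := hcard ▸ min_le_left _ _
  have hK₁0 : w K₁ = 0 := by
    simpa using momentMatrix_union_eq_zero h (by simp) hK₁s h0
  rw [← union_sdiff_of_subset hK₁]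
  refine momentMatrix_union_eq_zero h hK₁s ?_ hK₁0
  rw [card_sdiff_of_subset hK₁, hcard]
  omega

end Vanishing

section Integrality

variable {α : Type*} {w : Finset α → ℝ}

/-- The homogeneous form of `w_{i} / w_∅ ∈ {0, 1}`. -/
def IsIntegralAt (w : Finset α → ℝ) (i : α) : Prop :=
  w {i} = 0 ∨ w {i} = w ∅

theorem isIntegralAt_condOne_self [DecidableEq α] (i : α) (w : Finset α → ℝ) :
    IsIntegralAt (condOne i w) i :=
  Or.inr (by simp [condOne])

theorem isIntegralAt_condZero_self [DecidableEq α] (i : α) (w : Finset α → ℝ) :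
    IsIntegralAt (condZero i w) i :=
  Or.inl (by simp [condZero, condOne])

theorem IsIntegralAt.condOne_and_condZero [Fintype α] [DecidableEq α] {s : ℕ}
    (hw : (momentMatrix w (s + 2)).PosSemidef) {j : α} (h : IsIntegralAt w j) (i : α) :
    IsIntegralAt (condOne i w) j ∧ IsIntegralAt (condZero i w) j := by
  simp only [IsIntegralAt, condZero, condOne, Pi.sub_apply, insert_empty_eq]
  rcases h with h0 | h1
  · have hij : w {i, j} = 0 := by
      simpa [pair_comm] using momentMatrix_union_eq_zero hw (by simp) (by simp) h0 (J := {i})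
    simp [h0, hij]
  · -- `condZero j w` has zero mass, so its row at `∅` vanishes
    have hz := momentMatrix_union_eq_zero (posSemidef_momentMatrix_condZero hw j)
      (I := ∅) (J := {i}) (by simp) (by simp) (by simp [condZero, condOne, h1])
    have hij : w {i, j} = w {i} := by
      simp only [condZero, condOne, Pi.sub_apply, empty_union, pair_comm, sub_eq_zero] at hz
      exact hz.symm
    simp [h1, hij]

theorem IsIntegralAt.inv_smul {i : α} (h : IsIntegralAt w i) (h0 : w ∅ ≠ 0) :
    ((w ∅)⁻¹ • w) {i} = 0 ∨ ((w ∅)⁻¹ • w) {i} = 1 := by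
  rcases h with h | h <;> simp [h, h0]

end Integrality

section Decomposition

variable {α ι : Type*} [Fintype α] [DecidableEq α] {A : ι → α → ℝ} {b : ι → ℝ} {k : ℕ}
  {S : Finset α} {w : Finset α → ℝ} {L : List (Finset α → ℝ)}

def IsLocalDecomposition (A : ι → α → ℝ) (b : ι → ℝ) (k : ℕ) (S : Finset α)
    (w : Finset α → ℝ) (L : List (Finset α → ℝ)) : Prop :=
  (∀ z ∈ L, IsLasserreCone A b k z ∧ ∀ i ∈ S, IsIntegralAt z i) ∧
    ∀ J : Finset α, J.card ≤ 2 * k + 2 → w J = (L.map (· J)).sum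

theorem isLocalDecomposition_empty (hw : IsLasserreCone A b k w) :
    IsLocalDecomposition A b k ∅ w [w] :=
  ⟨by simpa using hw, by simp⟩

theorem IsLocalDecomposition.split (h : IsLocalDecomposition A b (k + 1) S w L) (i : α) :
    IsLocalDecomposition A b k (insert i S) w (L.map (condOne i) ++ L.map (condZero i)) := by
  refine ⟨?_, fun J hJ => ?_⟩
  · have hcond : ∀ z ∈ L, ∀ j ∈ S,
        IsIntegralAt (condOne i z) j ∧ IsIntegralAt (condZero i z) j := fun z hz j hj =>
      ((h.1 z hz).2 j hj).condOne_and_condZero (h.1 z hz).1.1 i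
    simp only [List.mem_append, List.mem_map, forall_mem_insert]
    rintro _ (⟨z, hz, rfl⟩ | ⟨z, hz, rfl⟩)
    · exact ⟨(h.1 z hz).1.condOne i, isIntegralAt_condOne_self i z,
        fun j hj => (hcond z hz j hj).1⟩
    · exact ⟨(h.1 z hz).1.condZero i, isIntegralAt_condZero_self i z,
        fun j hj => (hcond z hz j hj).2⟩
  · rw [h.2 J (by omega), List.map_append, List.sum_append, List.map_map, List.map_map,
      ← List.sum_map_add]
    exact congrArg List.sum (List.map_congr_left fun z _ =>
      (congrFun (condOne_add_condZero i z) J).symm)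

theorem exists_isLocalDecomposition {t : ℕ} (hw : IsLasserreCone A b t w) (S : Finset α)
    (hS : S.card ≤ t) : ∃ L, IsLocalDecomposition A b (t - S.card) S w L := by
  induction S using Finset.induction_on with
  | empty => exact ⟨[w], isLocalDecomposition_empty hw⟩
  | insert i S hi ih =>
    rw [card_insert_of_notMem hi] at hS ⊢
    obtain ⟨L, hL⟩ := ih (by omega)
    rw [show t - S.card = t - (S.card + 1) + 1 by omega] at hL
    exact ⟨_, hL.split i⟩

theorem IsLocalDecomposition.exists_empty_ne_zero (h : IsLocalDecomposition A b k S w L) :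
    ∃ L', IsLocalDecomposition A b k S w L' ∧ ∀ z ∈ L', z ∅ ≠ 0 := by
  refine ⟨L.filter fun z => z ∅ ≠ 0,
    ⟨fun z hz => h.1 z (List.mem_of_mem_filter hz), fun J hJ => ?_⟩,
    fun z hz => by simpa using (List.mem_filter.mp hz).2⟩
  have hvanish : ((L.filter fun z => ¬z ∅ ≠ 0).map (· J)).sum = 0 := by
    refine List.sum_eq_zero fun x hx => ?_
    obtain ⟨z, hz, rfl⟩ := List.mem_map.mp hx
    rw [List.mem_filter, decide_eq_true_iff, not_not] at hz
    exact eq_zero_of_empty_eq_zero (h.1 z hz.1).1.1 hz.2 (by omega)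
  rw [h.2 J hJ, ← List.sum_map_filter_add_sum_map_filter_not (fun z => z ∅ ≠ 0), hvanish,
    add_zero]

end Decomposition

/-- Local consistency: if `y ∈ Las_t(K)` and `S ⊆ [n]` with `|S| ≤ t`, then the truncation
of `y` to sets of size `≤ 2(t-|S|)+2` is a convex combination of level-`(t-|S|)` Lasserre
solutions that are integral on `S`. -/
theorem lasserre_local_consistency (n m t : ℕ) (A : Matrix (Fin m) (Fin n) ℝ) (b : Fin m → ℝ)
    (y : Finset (Fin n) → ℝ) (hy : IsLasserre (fun ℓ i => A ℓ i) b t y)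
    (S : Finset (Fin n)) (hS : S.card ≤ t) :
    ∃ (N : ℕ) (lam : Fin N → ℝ) (z : Fin N → Finset (Fin n) → ℝ),
      (∀ j, IsLasserre (fun ℓ i => A ℓ i) b (t - S.card) (z j)) ∧
      (∀ j, ∀ i ∈ S, z j {i} = 0 ∨ z j {i} = 1) ∧
      (∀ j, 0 ≤ lam j) ∧ (∑ j, lam j = 1) ∧
      (∀ J : Finset (Fin n), J.card ≤ 2 * (t - S.card) + 2 →
        y J = ∑ j, lam j * z j J) := by
  obtain ⟨hy₀, hcone⟩ := isLasserre_iff.mp hy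
  obtain ⟨L₀, hL₀⟩ := exists_isLocalDecomposition hcone S hS
  obtain ⟨L, ⟨hmem, hsum⟩, hne⟩ := hL₀.exists_empty_ne_zero
  have hmem' (j : Fin L.length) := hmem _ (List.getElem_mem j.2)
  have hne' (j : Fin L.length) := hne _ (List.getElem_mem j.2)
  refine ⟨L.length, fun j => L[j.1] ∅, fun j => (L[j.1] ∅)⁻¹ • L[j.1],
    fun j => (hmem' j).1.isLasserre_inv_smul (hne' j),
    fun j i hi => ((hmem' j).2 i hi).inv_smul (hne' j),
    fun j => (hmem' j).1.empty_nonneg, ?_, fun J hJ => ?_⟩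
  · exact (Fin.sum_univ_fun_getElem L (· ∅)).trans ((hsum ∅ (by simp)).symm.trans hy₀)
  · simp_rw [Pi.smul_apply, smul_eq_mul, ← mul_assoc, mul_inv_cancel₀ (hne' _), one_mul]
    exact (hsum J hJ).trans (Fin.sum_univ_fun_getElem L (· J)).symm
end

section
/- Let y ∈ Las_t(K) and I ⊆ [n] with |I| ≤ t. If y_{\{i\}} ∈ {0,1} for every i ∈ I, then y_I = ∏_{i∈I} y_{\{i\}}. -/
/-!
A positive semidefinite matrix `M` satisfies `M x = 0` whenever `xᴴ M x = 0`. In the moment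
matrix, `y_{i} = 0` makes the diagonal entry at `{i}` vanish, so the whole column
`J ↦ y_{J ∪ {i}}` vanishes; and `y_{i} = 1 = y_∅` makes `e_{i} - e_∅` such a vector, so the
columns at `{i}` and `∅` agree: `y_{J ∪ {i}} = y_J`. Removing the elements of `I` one at a time
yields the product formula.
-/

open Finset

namespace Matrix.PosSemidef

open scoped ComplexOrder

variable {ι 𝕜 : Type*} [Fintype ι] [DecidableEq ι] [RCLike 𝕜] {M : Matrix ι ι 𝕜}

theorem apply_eq_zero_of_diag_eq_zero_s5 (hM : M.PosSemidef) {a : ι} (h : M a a = 0) (j : ι) :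
    M j a = 0 := by
  have hker : M *ᵥ Pi.single a 1 = 0 :=
    (hM.dotProduct_mulVec_zero_iff _).mp (by simp [mulVec_single, h])
  simpa [mulVec_single] using congrFun hker j

theorem apply_eq_apply_of_quadForm_eq_zero (hM : M.PosSemidef) {a b : ι}
    (h : M a a - M a b - M b a + M b b = 0) (j : ι) : M j a = M j b := by
  have hker : M *ᵥ (Pi.single a 1 - Pi.single b 1) = 0 := by
    refine (hM.dotProduct_mulVec_zero_iff _).mp ?_
    simp only [star_sub, Pi.star_single, star_one, mulVec_sub, mulVec_single, MulOpposite.op_one,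
      one_smul, dotProduct_sub, sub_dotProduct, single_dotProduct, col_apply, one_mul]
    linear_combination h
  simpa [mulVec_sub, mulVec_single, sub_eq_zero] using congrFun hker j

end Matrix.PosSemidef

section MomentMatrix

variable {α : Type*} [Fintype α] [DecidableEq α] {y : Finset α → ℝ} {d : ℕ}

theorem moment_insert_eq_zero (hM : (momentMatrix y d).PosSemidef) {i : α} (hi : y {i} = 0)
    {J : Finset α} (hJ : (insert i J).card ≤ d) : y (insert i J) = 0 := by
  have hd : ({i} : Finset α).card ≤ d := (card_le_card (by simp)).trans hJ
  rw [insert_eq, union_comm]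
  exact hM.apply_eq_zero_of_diag_eq_zero_s5 (a := ⟨{i}, hd⟩) (by simpa [momentMatrix] using hi)
    ⟨J, (card_le_card (subset_insert i J)).trans hJ⟩

theorem moment_insert_eq_of_singleton_eq_one (h0 : y ∅ = 1) (hM : (momentMatrix y d).PosSemidef)
    {i : α} (hi : y {i} = 1) {J : Finset α} (hJ : (insert i J).card ≤ d) :
    y (insert i J) = y J := by
  have hd : ({i} : Finset α).card ≤ d := (card_le_card (by simp)).trans hJ
  calc y (insert i J) = y (J ∪ {i}) := by rw [insert_eq, union_comm]
    _ = y (J ∪ ∅) :=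
      hM.apply_eq_apply_of_quadForm_eq_zero (a := ⟨{i}, hd⟩) (b := ⟨∅, by simp⟩)
        (by simp [momentMatrix, hi, h0]) ⟨J, (card_le_card (subset_insert i J)).trans hJ⟩
    _ = y J := by rw [union_empty]

theorem moment_eq_prod_singleton (h0 : y ∅ = 1) (hM : (momentMatrix y d).PosSemidef)
    {s : Finset α} (hs : s.card ≤ d) (h01 : ∀ i ∈ s, y {i} = 0 ∨ y {i} = 1) :
    y s = ∏ i ∈ s, y {i} := by
  induction s using Finset.induction_on with
  | empty => simpa using h0
  | insert a s ha ih =>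
    rw [prod_insert ha]
    rcases h01 a (mem_insert_self a s) with ha0 | ha1
    · rw [moment_insert_eq_zero hM ha0 hs, ha0, zero_mul]
    · rw [moment_insert_eq_of_singleton_eq_one h0 hM ha1 hs, ha1, one_mul]
      exact ih ((card_le_card (subset_insert a s)).trans hs)
        fun i hi => h01 i (mem_insert_of_mem hi)

end MomentMatrix

/-- For `y ∈ Las_t(K)` and `|I| ≤ t`: if all singleton entries on `I` are `0/1`-valued,
then `y_I = ∏_{i ∈ I} y_{i}`. -/
theorem lasserre_product_on_integral (n m t : ℕ) (A : Matrix (Fin m) (Fin n) ℝ) (b : Fin m → ℝ)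
    (y : Finset (Fin n) → ℝ) (hy : IsLasserre (fun ℓ i => A ℓ i) b t y)
    (I : Finset (Fin n)) (hI : I.card ≤ t)
    (h01 : ∀ i ∈ I, y {i} = 0 ∨ y {i} = 1) :
    y I = ∏ i ∈ I, y {i} := by
  obtain ⟨h0, hM, -⟩ := hy
  exact moment_eq_prod_singleton h0 hM (hI.trans t.le_succ) h01
end

section
/- Let y ∈ Las_t(K) and I, J ⊆ [n] with |I| ≤ t and |J| ≤ t. If y_I = 1, then y_{I∪J} = y_J. -/
open Finset

open Matrix

/-! With `M` the moment matrix, `v = e_∅ - e_I` satisfies `vᵀ M v = y_∅ - 2 y_I + y_I = 0`,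
so positive semidefiniteness forces `M v = 0`; the `J`-th entry of `M v` is `y_J - y_{I ∪ J}`. -/

open scoped ComplexOrder in
/-- `h` says `(e_i - e_j)ᴴ M (e_i - e_j) = 0`. -/
theorem Matrix.PosSemidef.apply_eq_of_quadForm_eq_zero {𝕜 ι : Type*} [RCLike 𝕜] [Fintype ι]
    [DecidableEq ι] {M : Matrix ι ι 𝕜} (hM : M.PosSemidef) {i j : ι}
    (h : M i i - M i j - M j i + M j j = 0) (k : ι) : M k i = M k j := by
  set v : ι → 𝕜 := Pi.single i 1 - Pi.single j 1
  have hMv : ∀ k, (M *ᵥ v) k = M k i - M k j := fun k => by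
    simp [v, mulVec_sub]
  have hquad : star v ⬝ᵥ M *ᵥ v = 0 := by
    have hv : star v = v := by simp [v]
    rw [hv, sub_dotProduct, single_dotProduct, single_dotProduct, hMv, hMv, ← h]
    ring
  have := congrFun ((hM.dotProduct_mulVec_zero_iff v).mp hquad) k
  rwa [hMv, Pi.zero_apply, sub_eq_zero] at this

@[simp]
theorem momentMatrix_apply {α : Type*} [Fintype α] [DecidableEq α] (y : Finset α → ℝ) (t : ℕ)
    (I J : {I : Finset α // I.card ≤ t}) : momentMatrix y t I J = y (I.1 ∪ J.1) := rfl

/-- For `y ∈ Las_t(K)`, `|I|, |J| ≤ t` and `y_I = 1`, one has `y_{I ∪ J} = y_J`. -/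
theorem lasserre_union_of_one (n m t : ℕ) (A : Matrix (Fin m) (Fin n) ℝ) (b : Fin m → ℝ)
    (y : Finset (Fin n) → ℝ) (hy : IsLasserre (fun ℓ i => A ℓ i) b t y)
    (I J : Finset (Fin n)) (hI : I.card ≤ t) (hJ : J.card ≤ t) (hyI : y I = 1) :
    y (I ∪ J) = y J := by
  obtain ⟨hy0, hM, -⟩ := hy
  have key := hM.apply_eq_of_quadForm_eq_zero (i := ⟨∅, by simp⟩) (j := ⟨I, by omega⟩)
    (by simp [hy0, hyI]) ⟨J, by omega⟩
  simpa [union_comm J] using key.symm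
end

section
/- (Convergence of the Lasserre hierarchy.) Every y ∈ Las_n(K) lies in the convex hull of the moment vectors of integral feasible points: there exist x^{(1)}, …, x^{(N)} ∈ {0,1}^n with A·x^{(j)} ≥ b for all j, and coefficients λ_1, …, λ_N ≥ 0 with Σ_j λ_j = 1, such that y_I = Σ_j λ_j · ∏_{i∈I} x^{(j)}_i for every I ⊆ [n]. In particular Las_n^proj(K) = conv(K ∩ {0,1}^n). -/
/-
Let `μ` be the Möbius transform of `y` on the Boolean lattice of subsets of `[n]`, so that
`y I = ∑_{S ⊇ I} μ S`. At level `n` every subset indexes a row of the moment matrix, and the test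
vector `w_S(T) = (-1)^|T \ S| [S ⊆ T]` turns its quadratic form into `μ S`: hence `μ ≥ 0`. The same
vector applied to the shifted matrix of the constraint `ℓ` gives `(∑_{i ∈ S} A ℓ i - b ℓ) μ S ≥ 0`,
so every `S` with `μ S > 0` is the support of a feasible 0/1 point. As `∑_S μ S = y ∅ = 1`, `y` is
the convex combination of the moment vectors of these points with weights `μ S`.
-/

open Finset

theorem sum_Icc_neg_one_pow_card {α : Type*} [DecidableEq α] (S U : Finset α) :
    ∑ T ∈ Icc S U, (-1 : ℝ) ^ #T = if S = U then (-1) ^ #S else 0 := by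
  by_cases hSU : S ⊆ U
  · have hinj : Set.InjOn (S ∪ ·) ((U \ S).powerset : Set (Finset α)) := fun V hV W hW hVW => by
      simp only [coe_powerset, Set.mem_preimage, Set.mem_powerset_iff, coe_subset] at hV hW
      rw [← union_sdiff_cancel_left (disjoint_sdiff.mono_right hV),
        ← union_sdiff_cancel_left (disjoint_sdiff.mono_right hW)]
      exact congrArg (· \ S) hVW
    have hpow : ∑ V ∈ (U \ S).powerset, (-1 : ℝ) ^ #V = if U \ S = ∅ then 1 else 0 := by
      exact_mod_cast sum_powerset_neg_one_pow_card
    rw [Icc_eq_image_powerset hSU, sum_image hinj]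
    calc ∑ V ∈ (U \ S).powerset, (-1 : ℝ) ^ #(S ∪ V)
        = ∑ V ∈ (U \ S).powerset, (-1) ^ #S * (-1) ^ #V :=
          sum_congr rfl fun V hV => by
            rw [card_union_of_disjoint (disjoint_sdiff.mono_right (mem_powerset.1 hV)), pow_add]
      _ = if S = U then (-1) ^ #S else 0 := by
          rw [← mul_sum, hpow]
          simp only [sdiff_eq_empty_iff_subset]
          by_cases hUS : U ⊆ S
          · rw [if_pos hUS, if_pos (subset_antisymm hSU hUS), mul_one]
          · rw [if_neg hUS, if_neg fun h => hUS h.ge, mul_zero]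
  · rw [Icc_eq_empty (by simpa using hSU), if_neg (fun h => hSU h.le), sum_empty]

section Moebius

variable {α : Type*} [Fintype α] [DecidableEq α]

def zetaTransform (f : Finset α → ℝ) (I : Finset α) : ℝ :=
  ∑ S with I ⊆ S, f S

/-- For `S ⊆ T` the sign `(-1) ^ (#S + #T)` is `(-1) ^ #(T \ S)`; the symmetric form makes both
inversion formulas instances of `sum_Icc_neg_one_pow_card`. -/
def moebiusWeight (S T : Finset α) : ℝ :=
  if S ⊆ T then (-1) ^ (#S + #T) else 0

def moebiusTransform (z : Finset α → ℝ) (S : Finset α) : ℝ :=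
  ∑ T, moebiusWeight S T * z T

theorem sum_sum_subset_comm (F : Finset α → Finset α → ℝ) :
    ∑ T, ∑ U with T ⊆ U, F T U = ∑ U, ∑ T with T ⊆ U, F T U :=
  sum_comm' fun _ _ => by simp

theorem sum_moebiusWeight_subset (S U : Finset α) :
    ∑ T with T ⊆ U, moebiusWeight S T = if S = U then 1 else 0 := by
  have : ∑ T with T ⊆ U, moebiusWeight S T = (-1) ^ #S * ∑ T ∈ Icc S U, (-1 : ℝ) ^ #T := by
    simp only [moebiusWeight]
    rw [← sum_filter, filter_filter, mul_sum]
    exact sum_congr (by ext; simp [and_comm]) fun T _ => pow_add _ _ _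
  rw [this, sum_Icc_neg_one_pow_card]
  split_ifs <;> simp [← pow_add, ← two_mul, pow_mul]

theorem sum_moebiusWeight_supset (I T : Finset α) :
    ∑ S with I ⊆ S, moebiusWeight S T = if I = T then 1 else 0 := by
  have : ∑ S with I ⊆ S, moebiusWeight S T = (-1) ^ #T * ∑ S ∈ Icc I T, (-1 : ℝ) ^ #S := by
    simp only [moebiusWeight]
    rw [← sum_filter, filter_filter, mul_sum]
    exact sum_congr (by ext; simp) fun S _ => by rw [pow_add, mul_comm]
  rw [this, sum_Icc_neg_one_pow_card]
  split_ifs with h <;> simp [h, ← pow_add, ← two_mul, pow_mul]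

theorem moebiusTransform_zetaTransform (f : Finset α → ℝ) :
    moebiusTransform (zetaTransform f) = f := by
  ext S
  simp only [moebiusTransform, zetaTransform, mul_sum]
  rw [sum_sum_subset_comm]
  simp only [← sum_mul, sum_moebiusWeight_subset, ite_mul, one_mul, zero_mul, sum_ite_eq, mem_univ,
    if_true]

theorem zetaTransform_moebiusTransform (z : Finset α → ℝ) :
    zetaTransform (moebiusTransform z) = z := by
  ext I
  simp only [zetaTransform, moebiusTransform]
  rw [sum_comm]
  simp only [← sum_mul, sum_moebiusWeight_supset, ite_mul, one_mul, zero_mul, sum_ite_eq, mem_univ,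
    if_true]

theorem sum_sum_mul_zetaTransform_union (v μ : Finset α → ℝ) :
    ∑ T, ∑ T', v T * v T' * zetaTransform μ (T ∪ T') =
      ∑ U, μ U * (∑ T with T ⊆ U, v T) ^ 2 := by
  simp only [zetaTransform, sq, sum_filter, sum_mul_sum (s := univ), mul_sum]
  conv_rhs => rw [sum_comm]; enter [2, T]; rw [sum_comm]
  refine sum_congr rfl fun T _ => sum_congr rfl fun T' _ => sum_congr rfl fun U _ => ?_
  by_cases hT : T ⊆ U <;> by_cases hT' : T' ⊆ U <;> simp [hT, hT', union_subset_iff]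
  ring

theorem sum_sum_mul_union_nonneg_of_posSemidef {z : Finset α → ℝ} {t : ℕ}
    (hz : (momentMatrix z t).PosSemidef) (ht : ∀ I : Finset α, #I ≤ t) (v : Finset α → ℝ) :
    0 ≤ ∑ T, ∑ T', v T * v T' * z (T ∪ T') := by
  have := (hz.submatrix fun T => ⟨T, ht T⟩).dotProduct_mulVec_nonneg v
  simp only [dotProduct, Matrix.mulVec, Matrix.submatrix_apply, momentMatrix, star_trivial,
    mul_sum] at this
  exact this.trans_eq (sum_congr rfl fun T _ => sum_congr rfl fun T' _ => by ring)

theorem moebiusTransform_nonneg_of_posSemidef {z : Finset α → ℝ} {t : ℕ}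
    (hz : (momentMatrix z t).PosSemidef) (ht : ∀ I : Finset α, #I ≤ t) (S : Finset α) :
    0 ≤ moebiusTransform z S := by
  have hform : ∑ T, ∑ T', moebiusWeight S T * moebiusWeight S T' * z (T ∪ T') =
      moebiusTransform z S := by
    conv_lhs => rw [← zetaTransform_moebiusTransform z]
    simp [sum_sum_mul_zetaTransform_union, sum_moebiusWeight_subset]
  exact hform ▸ sum_sum_mul_union_nonneg_of_posSemidef hz ht _

section Shift

variable {ι : Type*} (A : ι → α → ℝ) (b : ι → ℝ) (ℓ : ι)

theorem shiftVec_zetaTransform (μ : Finset α → ℝ) :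
    shiftVec A b ℓ (zetaTransform μ) =
      zetaTransform fun U => ((∑ i ∈ U, A ℓ i) - b ℓ) * μ U := by
  ext I
  have hswap : ∑ U with I ⊆ U, ∑ i ∈ U, A ℓ i * μ U = ∑ i, ∑ U with insert i I ⊆ U, A ℓ i * μ U :=
    sum_comm' fun _ _ => by simp [insert_subset_iff, and_comm]
  simp only [shiftVec, zetaTransform, sub_mul, sum_sub_distrib, sum_mul, ← mul_sum, hswap]

theorem moebiusTransform_shiftVec (z : Finset α → ℝ) (S : Finset α) :
    moebiusTransform (shiftVec A b ℓ z) S = ((∑ i ∈ S, A ℓ i) - b ℓ) * moebiusTransform z S := by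
  conv_lhs => rw [← zetaTransform_moebiusTransform z]
  rw [shiftVec_zetaTransform, moebiusTransform_zetaTransform]

variable {A b ℓ}

theorem le_sum_of_moebiusTransform_pos {z : Finset α → ℝ} {t : ℕ}
    (hz : (momentMatrix (shiftVec A b ℓ z) t).PosSemidef) (ht : ∀ I : Finset α, #I ≤ t)
    {S : Finset α} (hS : 0 < moebiusTransform z S) : b ℓ ≤ ∑ i ∈ S, A ℓ i := by
  have := moebiusTransform_nonneg_of_posSemidef hz ht S
  rw [moebiusTransform_shiftVec] at this
  exact sub_nonneg.1 (nonneg_of_mul_nonneg_left this hS)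

end Shift

theorem zetaTransform_eq_sum_mul_prod (μ : Finset α → ℝ) (I : Finset α) :
    zetaTransform μ I = ∑ S, μ S * ∏ i ∈ I, if i ∈ S then 1 else 0 := by
  simp only [zetaTransform, prod_boole, mul_ite, mul_one, mul_zero, sum_filter, subset_iff]

end Moebius

theorem exists_fin_enum_sum_mul_eq {β : Type*} [Fintype β] (P : β → Prop) (μ : β → ℝ)
    (hP : ∀ S, μ S ≠ 0 → P S) :
    ∃ (N : ℕ) (x : Fin N → β), (∀ j, P (x j)) ∧
      ∀ g : β → ℝ, ∑ S, μ S * g S = ∑ j, μ (x j) * g (x j) := by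
  classical
  let e := Fintype.equivFin {S // P S}
  refine ⟨Fintype.card {S // P S}, fun j => (e.symm j).1, fun j => (e.symm j).2, fun g => ?_⟩
  rw [e.symm.sum_comp (fun S => μ S.1 * g S.1),
    ← sum_subtype (univ.filter P) (by simp) fun S => μ S * g S,
    sum_filter_of_ne fun S _ h => hP S (left_ne_zero_of_mul h)]

/-- Convergence of the Lasserre hierarchy: every `y ∈ Las_n(K)` is a convex combination of
moment vectors of integral feasible points. -/
theorem lasserre_convergence (n m : ℕ) (A : Matrix (Fin m) (Fin n) ℝ) (b : Fin m → ℝ)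
    (y : Finset (Fin n) → ℝ) (hy : IsLasserre (fun ℓ i => A ℓ i) b n y) :
    ∃ (N : ℕ) (lam : Fin N → ℝ) (x : Fin N → Fin n → ℝ),
      (∀ j, ∀ i, x j i = 0 ∨ x j i = 1) ∧
      (∀ j, memK A b (x j)) ∧
      (∀ j, 0 ≤ lam j) ∧ (∑ j, lam j = 1) ∧
      (∀ I : Finset (Fin n), y I = ∑ j, lam j * ∏ i ∈ I, x j i) := by
  obtain ⟨hy_empty, hy_moment, hy_shift⟩ := hy
  set μ := moebiusTransform y
  have hcard (I : Finset (Fin n)) : #I ≤ n := (card_le_univ I).trans_eq (Fintype.card_fin n)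
  have hμ : ∀ S, 0 ≤ μ S :=
    moebiusTransform_nonneg_of_posSemidef hy_moment fun I => (hcard I).trans n.le_succ
  have hy_eq (I) : y I = ∑ S, μ S * ∏ i ∈ I, if i ∈ S then 1 else 0 := by
    rw [← zetaTransform_eq_sum_mul_prod, zetaTransform_moebiusTransform]
  have hfeas (S) (hS : μ S ≠ 0) : memK A b fun i => if i ∈ S then 1 else 0 := fun ℓ => by
    simpa only [mul_ite, mul_one, mul_zero, sum_ite_mem, univ_inter] using
      le_sum_of_moebiusTransform_pos (hy_shift ℓ) hcard ((hμ S).lt_of_ne' hS)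
  obtain ⟨N, S, hS, hsum⟩ := exists_fin_enum_sum_mul_eq _ μ hfeas
  refine ⟨N, fun j => μ (S j), fun j i => if i ∈ S j then 1 else 0,
    fun _ _ => (ite_eq_or_eq _ _ _).symm, hS, fun _ => hμ _, ?_, fun I => (hy_eq I).trans (hsum _)⟩
  calc ∑ j, μ (S j) = ∑ T, μ T := by simpa using (hsum fun _ => 1).symm
    _ = y ∅ := by simp [hy_eq]
    _ = 1 := hy_empty
end

section
/- (PSD is preserved under conditioning.) Let 𝒯 be a family of subsets of [n], let X ⊆ S ⊆ [n], and let y be a real vector indexed by all subsets of [n]. Define 𝒯⊖S := {I ∈ 𝒯 : I ∪ J ∈ 𝒯 for all J ⊆ S} and z_I := Σ_{H ⊆ S∖X} (−1)^{|H|} · y_{I ∪ X ∪ H}. If the matrix with rows and columns indexed by 𝒯 and entries y_{I∪J} is positive semidefinite, then the matrix with rows and columns indexed by 𝒯⊖S and entries z_{I∪J} is positive semidefinite. -/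
open Finset

/-- The moment matrix of `y` indexed by a family `𝒯` of subsets of `[n]`. -/
def momM (n : ℕ) (T : Finset (Finset (Fin n))) (y : Finset (Fin n) → ℝ) :
    Matrix {I // I ∈ T} {I // I ∈ T} ℝ :=
  Matrix.of fun I J => y (I.1 ∪ J.1)

/-- `𝒯 ⊖ S := {I ∈ 𝒯 : I ∪ J ∈ 𝒯 for all J ⊆ S}`. -/
def famOminus (n : ℕ) (T : Finset (Finset (Fin n))) (S : Finset (Fin n)) :
    Finset (Finset (Fin n)) :=
  T.filter fun I => ∀ J ∈ S.powerset, I ∪ J ∈ T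

/-- The conditioning `{y}_{X, −S∖X}` with entries `Σ_{H ⊆ S∖X} (−1)^{|H|} y_{I ∪ X ∪ H}`. -/
def conditioning (n : ℕ) (y : Finset (Fin n) → ℝ) (X S : Finset (Fin n)) :
    Finset (Fin n) → ℝ :=
  fun I => ∑ H ∈ (S \ X).powerset, (-1 : ℝ) ^ H.card * y (I ∪ X ∪ H)

/-!
Since `(-1)^|K| = Σ_{H ∪ H' = K} (-1)^|H| (-1)^|H'|` for subsets of `D = S ∖ X`,
`z_{I ∪ J} = Σ_{H, H' ⊆ D} (-1)^|H| (-1)^|H'| y_{(I ∪ X ∪ H) ∪ (J ∪ X ∪ H')}`.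
For `I ∈ 𝒯 ⊖ S` every `I ∪ X ∪ H` lies in `𝒯`, so `M_{𝒯⊖S}(z) = Bᵀ M_𝒯(y) B`
where `B` sends `I` to `Σ_H (-1)^|H| e_{I ∪ X ∪ H}`, and congruence preserves positive
semidefiniteness.
-/

theorem Finset.sum_powerset_sum_powerset_neg_one_pow_mul_union {α R : Type*} [DecidableEq α]
    [CommRing R] (D : Finset α) (f : Finset α → R) :
    ∑ H ∈ D.powerset, ∑ H' ∈ D.powerset, (-1 : R) ^ #H * (-1) ^ #H' * f (H ∪ H') =
      ∑ K ∈ D.powerset, (-1 : R) ^ #K * f K := by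
  induction D using Finset.induction_on generalizing f with
  | empty => simp
  | insert a D ha ih =>
    have hsign : ∀ H ∈ D.powerset, (-1 : R) ^ #(insert a H) = -(-1) ^ #H := fun H hH => by
      rw [card_insert_of_notMem fun h => ha (mem_powerset.1 hH h), pow_succ, mul_neg_one]
    have key : ∀ H ∈ D.powerset,
        ∑ H' ∈ (insert a D).powerset, (-1 : R) ^ #H * (-1) ^ #H' * f (H ∪ H') +
          ∑ H' ∈ (insert a D).powerset,
            (-1 : R) ^ #(insert a H) * (-1) ^ #H' * f (insert a H ∪ H') =
        ∑ H' ∈ D.powerset, (-1 : R) ^ #H * (-1) ^ #H' * f (H ∪ H') -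
          ∑ H' ∈ D.powerset, (-1 : R) ^ #H * (-1) ^ #H' * f (insert a (H ∪ H')) := by
      intro H hH
      rw [sum_powerset_insert ha, sum_powerset_insert ha, ← sub_eq_zero]
      simp only [hsign H hH, ← sum_sub_distrib, ← sum_add_distrib]
      refine sum_eq_zero fun H' hH' => ?_
      rw [hsign H' hH', union_insert, insert_union, insert_union, union_insert, insert_idem]
      ring
    rw [sum_powerset_insert ha, sum_powerset_insert ha, ← sum_add_distrib, sum_congr rfl key,
      sum_sub_distrib, ih, ih (fun K => f (insert a K)), sub_eq_add_neg, ← sum_neg_distrib]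
    refine congrArg _ (sum_congr rfl fun K hK => ?_)
    rw [hsign K hK, neg_mul]

theorem Matrix.PosSemidef.sum_sum_smul_submatrix {m n α R : Type*} [Fintype m] [Fintype n]
    [Fintype α] [CommRing R] [PartialOrder R] [StarRing R] {A : Matrix m m R}
    (hA : A.PosSemidef) (c : α → R) (f : α → n → m) :
    (∑ a, ∑ b, (star (c a) * c b) • A.submatrix (f a) (f b)).PosSemidef := by
  classical
  have hsub : ∀ a b,
      (1 : Matrix m m R).submatrix (f a) id * A * (1 : Matrix m m R).submatrix id (f b) =
        A.submatrix (f a) (f b) := by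
    intro a b
    ext i j
    simp [Matrix.mul_apply, Matrix.one_apply]
  let B : Matrix m n R := ∑ a, c a • (1 : Matrix m m R).submatrix id (f a)
  convert hA.conjTranspose_mul_mul_same B using 1
  simp only [B, Matrix.conjTranspose_sum, Matrix.conjTranspose_smul, Matrix.conjTranspose_submatrix,
    Matrix.conjTranspose_one, Matrix.sum_mul, Matrix.mul_sum, Matrix.smul_mul, Matrix.mul_smul,
    smul_smul, hsub, Finset.smul_sum]
  rw [Finset.sum_comm]
  simp only [mul_comm]

lemma union_mem_of_mem_famOminus {n : ℕ} {T : Finset (Finset (Fin n))} {S I J : Finset (Fin n)}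
    (hI : I ∈ famOminus n T S) (hJ : J ⊆ S) : I ∪ J ∈ T :=
  (mem_filter.1 hI).2 J (mem_powerset.2 hJ)

/-- PSD-ness is preserved under conditioning: if `M_𝒯(y) ⪰ 0` then
`M_{𝒯⊖S}({y}_{X,−S∖X}) ⪰ 0` for any `X ⊆ S`. -/
theorem conditioning_posSemidef (n : ℕ) (T : Finset (Finset (Fin n)))
    (X S : Finset (Fin n)) (hXS : X ⊆ S) (y : Finset (Fin n) → ℝ)
    (hpsd : (momM n T y).PosSemidef) :
    (momM n (famOminus n T S) (conditioning n y X S)).PosSemidef := by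
  let sign (H : (S \ X).powerset) : ℝ := (-1) ^ #H.1
  let shift (H : (S \ X).powerset) (I : famOminus n T S) : T :=
    ⟨I ∪ (X ∪ H), union_mem_of_mem_famOminus I.2
      (union_subset hXS ((mem_powerset.1 H.2).trans sdiff_subset))⟩
  have hmom : momM n (famOminus n T S) (conditioning n y X S) =
      ∑ H, ∑ H', (star (sign H) * sign H') • (momM n T y).submatrix (shift H) (shift H') := by
    ext I J
    simp only [momM, conditioning, Matrix.of_apply, Matrix.sum_apply, Matrix.smul_apply,
      Matrix.submatrix_apply, smul_eq_mul, star_trivial, sign, shift]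
    rw [← sum_powerset_sum_powerset_neg_one_pow_mul_union, ← sum_coe_sort]
    refine sum_congr rfl fun H _ => ?_
    rw [← sum_coe_sort]
    refine sum_congr rfl fun H' _ => ?_
    congr 2
    ext a
    simp only [mem_union]
    tauto
  rw [hmom]
  exact hpsd.sum_sum_smul_submatrix sign shift
end

section
/- For every edge e ∈ E lying between levels V_j and V_{j+1} (i.e. e ∈ (V_j × V_{j+1}) ∩ E) and every Lasserre solution Ȳ ∈ Las_{t'}(K) with t' ≥ j, one has Σ_{P ∈ Q(e)} ȳ_P ≤ ȳ_{\{e\}}, where the sum is over all r–v paths P whose last edge is e and ȳ_H denotes the entry of Ȳ indexed by the edge set H. -/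
open Finset

/-- An `ℓ`-level Directed Steiner Tree instance: a directed graph on vertex set `V` with edge
set `E`, root `r`, terminal set `X`, whose vertices are arranged in levels
`V_0 = {r}, V_1, …, V_levels = X` with every edge going from one level to the next. -/
structure DSTInstance (V : Type*) [Fintype V] [DecidableEq V] where
  E : Finset (V × V)
  r : V
  X : Finset V
  levels : ℕ
  level : V → ℕ
  level_le : ∀ v, level v ≤ levels
  level_root : ∀ v, level v = 0 ↔ v = r
  level_terminal : ∀ v, level v = levels ↔ v ∈ X
  edge_level : ∀ e ∈ E, level e.2 = level e.1 + 1

variable {V : Type*} [Fintype V] [DecidableEq V]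

/-- LP variables of the Directed Steiner Tree LP: a capacity variable `y_e` for each edge
`e ∈ E` and a flow variable `f_{s,e}` for each terminal `s ∈ X` and edge `e ∈ E`. -/
def DSTVar (G : DSTInstance V) : Type _ :=
  {e : V × V // e ∈ G.E} ⊕ {p : V × (V × V) // p.1 ∈ G.X ∧ p.2 ∈ G.E}

instance (G : DSTInstance V) : Fintype (DSTVar G) :=
  inferInstanceAs (Fintype ({e : V × V // e ∈ G.E} ⊕ {p : V × (V × V) // p.1 ∈ G.X ∧ p.2 ∈ G.E}))

instance (G : DSTInstance V) : DecidableEq (DSTVar G) :=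
  inferInstanceAs (DecidableEq ({e : V × V // e ∈ G.E} ⊕ {p : V × (V × V) // p.1 ∈ G.X ∧ p.2 ∈ G.E}))

/-- Index type for the linear constraints of the Directed Steiner Tree LP: flow conservation
(for each terminal `s ∈ X` and vertex `v`, two inequalities forming an equality), capacity
constraints `f_{s,e} ≤ y_e`, indegree constraints `Σ_{e ∈ δ⁻(v)} y_e ≤ 1`, and the box
constraints `0 ≤ x ≤ 1` for every variable. -/
def DSTCon (G : DSTInstance V) : Type _ :=
  (({s : V // s ∈ G.X} × V) × Bool) ⊕
  ({p : V × (V × V) // p.1 ∈ G.X ∧ p.2 ∈ G.E} ⊕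
  (V ⊕ (DSTVar G × Bool)))

/-- Left-hand side coefficients of the Directed Steiner Tree LP constraints (as `a·x ≥ β`). -/
def dstA (G : DSTInstance V) : DSTCon G → DSTVar G → ℝ
  | Sum.inl ((s, v), d) => fun w =>
      (if d then (1 : ℝ) else -1) *
        (match w with
          | Sum.inl _ => 0
          | Sum.inr p =>
              if p.1.1 = s.1 then
                (if p.1.2.1 = v then (1 : ℝ) else 0) - (if p.1.2.2 = v then (1 : ℝ) else 0)
              else 0)
  | Sum.inr (Sum.inl p) => fun w =>
      (match w with
        | Sum.inl e => if e.1 = p.1.2 then (1 : ℝ) else 0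
        | Sum.inr q => if q.1 = p.1 then (-1 : ℝ) else 0)
  | Sum.inr (Sum.inr (Sum.inl v)) => fun w =>
      (match w with
        | Sum.inl e => if e.1.2 = v then (-1 : ℝ) else 0
        | Sum.inr _ => 0)
  | Sum.inr (Sum.inr (Sum.inr (w0, d))) => fun w =>
      if w = w0 then (if d then (1 : ℝ) else -1) else 0

/-- Right-hand sides of the Directed Steiner Tree LP constraints (as `a·x ≥ β`). -/
def dstb (G : DSTInstance V) : DSTCon G → ℝ
  | Sum.inl ((s, v), d) =>
      (if d then (1 : ℝ) else -1) *
        (if v = G.r then 1 else if v = s.1 then -1 else 0)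
  | Sum.inr (Sum.inl _) => 0
  | Sum.inr (Sum.inr (Sum.inl _)) => -1
  | Sum.inr (Sum.inr (Sum.inr (_, d))) => if d then (0 : ℝ) else -1

/-- `IsRPath G P v`: the edge set `P` is a directed path from the root `r` to `v` in `G`. -/
inductive IsRPath (G : DSTInstance V) : Finset (V × V) → V → Prop
  | nil : IsRPath G ∅ G.r
  | cons {P : Finset (V × V)} {u v : V} :
      IsRPath G P u → (u, v) ∈ G.E → IsRPath G (insert (u, v) P) v

/-- The set of Lasserre variables corresponding to the capacity variables `y_e`, `e ∈ P`. -/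
def edgeVars (G : DSTInstance V) (P : Finset (V × V)) : Finset (DSTVar G) :=
  ((Finset.univ : Finset {e : V × V // e ∈ G.E}).filter (fun e => e.1 ∈ P)).image Sum.inl


/-! Every root path to a vertex `v` on level `j + 1` is a root path to some `u` followed by its
last edge `(u, v)`, and different last edges give different paths. So, by induction on the level,
for every set `K` of Lasserre variables
`Σ_{P ∈ Q(v)} y_{P ∪ K} ≤ Σ_{(u,v) ∈ δ⁻(v)} y_{K ∪ {(u,v)}} ≤ y_K`,
the last step being the indegree constraint at `v` shifted by `K`. Each level adds one edge to
`K`, so all shifts stay within the Lasserre level as long as `|K| + level(v) ≤ t' + 1`. Since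
`Q(e)` consists of the paths in `Q(u)` extended by `e = (u, w)`, the theorem is the case `v = u`,
`K = {y_e}`. -/

theorem IsLasserre.shift_nonneg {α ι : Type*} [Fintype α] [DecidableEq α]
    {A : ι → α → ℝ} {b : ι → ℝ} {t : ℕ} {y : Finset α → ℝ}
    (hy : IsLasserre A b t y) (ℓ : ι) {I : Finset α} (hI : #I ≤ t) :
    b ℓ * y I ≤ ∑ i, A ℓ i * y (insert i I) := by
  have h := (hy.2.2 ℓ).diag_nonneg (i := ⟨I, hI⟩)
  simp only [momentMatrix, shiftVec, union_self] at h
  linarith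

namespace DSTInstance

variable (G : DSTInstance V)

def edgeVar (e : {e : V × V // e ∈ G.E}) : DSTVar G := Sum.inl e

def inEdges (v : V) : Finset {e : V × V // e ∈ G.E} :=
  univ.filter fun e => e.1.2 = v

open Classical in
noncomputable def rootPaths (v : V) : Finset (Finset (V × V)) :=
  univ.filter fun P => IsRPath G P v

variable {G}

@[simp]
theorem mem_inEdges {v : V} {e : {e : V × V // e ∈ G.E}} : e ∈ G.inEdges v ↔ e.1.2 = v := by
  simp [inEdges]

@[simp]
theorem mem_rootPaths {v : V} {P : Finset (V × V)} : P ∈ G.rootPaths v ↔ IsRPath G P v := by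
  simp [rootPaths]

theorem level_fst_of_mem_inEdges {v : V} {e : {e : V × V // e ∈ G.E}} (he : e ∈ G.inEdges v) :
    G.level e.1.1 + 1 = G.level v := by
  rw [← mem_inEdges.1 he, G.edge_level e.1 e.2]

end DSTInstance

open DSTInstance

section

variable {G : DSTInstance V}

theorem IsRPath.level_le {P : Finset (V × V)} {v : V} (h : IsRPath G P v) :
    ∀ p ∈ P, G.level p.2 ≤ G.level v := by
  induction h with
  | nil => simp
  | @cons P u w _ huw ih =>
    have : G.level w = G.level u + 1 := G.edge_level (u, w) huw
    intro p hp
    rcases mem_insert.1 hp with rfl | hp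
    · exact le_rfl
    · exact (ih p hp).trans (by omega)

theorem IsRPath.notMem_of_level_lt {P : Finset (V × V)} {v : V} (h : IsRPath G P v)
    {e : V × V} (he : G.level v < G.level e.2) : e ∉ P :=
  fun hm => (h.level_le e hm).not_gt he

theorem IsRPath.notMem_of_mem_edges {P : Finset (V × V)} {e : V × V} (he : e ∈ G.E)
    (h : IsRPath G P e.1) : e ∉ P :=
  h.notMem_of_level_lt (by rw [G.edge_level e he]; omega)

theorem rootPaths_eq_singleton_empty {v : V} (hv : G.level v = 0) : G.rootPaths v = {∅} := by
  obtain rfl := (G.level_root v).1 hv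
  ext P
  simp only [mem_rootPaths, mem_singleton]
  constructor
  · rintro (_ | ⟨_, huv⟩)
    · rfl
    · rename_i u _
      have : G.level G.r = G.level u + 1 := G.edge_level _ huv
      omega
  · rintro rfl
    exact .nil

theorem rootPaths_eq_biUnion {v : V} (hv : G.level v ≠ 0) :
    G.rootPaths v = (G.inEdges v).biUnion fun e => (G.rootPaths e.1.1).image (insert e.1) := by
  ext P
  simp only [mem_rootPaths, mem_biUnion, mem_inEdges, mem_image]
  constructor
  · rintro (_ | ⟨hP, huv⟩)
    · exact absurd ((G.level_root _).2 rfl) hv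
    · exact ⟨⟨_, huv⟩, rfl, _, hP, rfl⟩
  · rintro ⟨⟨⟨u, w⟩, huw⟩, rfl, P', hP', rfl⟩
    exact hP'.cons huw

theorem pairwiseDisjoint_image_insert_rootPaths (v : V) :
    (G.inEdges v : Set {e : V × V // e ∈ G.E}).PairwiseDisjoint
      fun e => (G.rootPaths e.1.1).image (insert e.1) := by
  intro a ha b hb hab
  simp only [Function.onFun, disjoint_left, mem_image, mem_rootPaths]
  rintro _ ⟨P, -, rfl⟩ ⟨Q, hQ, hQP⟩
  have ha_mem : a.1 ∈ insert b.1 Q := hQP ▸ mem_insert_self _ _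
  rcases mem_insert.1 ha_mem with h | h
  · exact hab (Subtype.ext h)
  · have := hQ.level_le a.1 h
    have := level_fst_of_mem_inEdges hb
    rw [mem_inEdges.1 ha] at *
    omega

theorem edgeVars_empty : edgeVars G ∅ = ∅ := by
  unfold edgeVars
  rw [filter_false_of_mem fun _ _ => notMem_empty _]
  exact image_empty _

theorem edgeVars_insert {e : V × V} (he : e ∈ G.E) (P : Finset (V × V)) :
    edgeVars G (insert e P) = insert (G.edgeVar ⟨e, he⟩) (edgeVars G P) := by
  have hfilter : univ.filter (fun a : {e : V × V // e ∈ G.E} => a.1 ∈ insert e P)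
      = insert ⟨e, he⟩ (univ.filter fun a => a.1 ∈ P) := by
    ext a
    simp [Subtype.ext_iff]
  unfold edgeVars
  rw [hfilter]
  exact image_insert _ _ _

theorem edgeVars_singleton {e : V × V} (he : e ∈ G.E) :
    edgeVars G {e} = {G.edgeVar ⟨e, he⟩} := by
  rw [← insert_empty, edgeVars_insert he, edgeVars_empty]
  rfl

theorem sum_image_insert_rootPaths {e : V × V} (he : e ∈ G.E) (Y : Finset (DSTVar G) → ℝ)
    (K : Finset (DSTVar G)) :
    ∑ P ∈ (G.rootPaths e.1).image (insert e), Y (edgeVars G P ∪ K)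
      = ∑ P ∈ G.rootPaths e.1, Y (edgeVars G P ∪ insert (G.edgeVar ⟨e, he⟩) K) := by
  rw [sum_image]
  · refine sum_congr rfl fun P _ => ?_
    rw [edgeVars_insert he, insert_union, union_insert]
  · intro P hP Q hQ hPQ
    rw [← erase_insert ((mem_rootPaths.1 hP).notMem_of_mem_edges he),
      ← erase_insert ((mem_rootPaths.1 hQ).notMem_of_mem_edges he), hPQ]

variable {t : ℕ} {Y : Finset (DSTVar G) → ℝ}

theorem sum_dstVar (f : DSTVar G → ℝ) :
    ∑ w, f w = ∑ e, f (G.edgeVar e) + ∑ p, f (Sum.inr p) :=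
  Fintype.sum_sum_type f

theorem IsLasserre.sum_inEdges_le (hY : IsLasserre (dstA G) (dstb G) t Y) (v : V)
    {I : Finset (DSTVar G)} (hI : #I ≤ t) :
    ∑ e ∈ G.inEdges v, Y (insert (G.edgeVar e) I) ≤ Y I := by
  have h := hY.shift_nonneg (Sum.inr (Sum.inr (Sum.inl v))) hI
  rw [sum_dstVar] at h
  have hrhs : dstb G (Sum.inr (Sum.inr (Sum.inl v))) = -1 := rfl
  have hedge (e : {e : V × V // e ∈ G.E}) :
      dstA G (Sum.inr (Sum.inr (Sum.inl v))) (G.edgeVar e) = if e.1.2 = v then -1 else 0 := rfl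
  have hflow (p : {p : V × (V × V) // p.1 ∈ G.X ∧ p.2 ∈ G.E}) :
      dstA G (Sum.inr (Sum.inr (Sum.inl v))) (Sum.inr p) = 0 := rfl
  simp only [hrhs, hedge, hflow, ite_mul, neg_one_mul, zero_mul, sum_const_zero, add_zero,
    ← sum_filter, sum_neg_distrib] at h
  rw [inEdges]
  linarith

theorem IsLasserre.sum_rootPaths_le (hY : IsLasserre (dstA G) (dstb G) t Y) {v : V}
    {K : Finset (DSTVar G)} (hK : #K + G.level v ≤ t + 1) :
    ∑ P ∈ G.rootPaths v, Y (edgeVars G P ∪ K) ≤ Y K := by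
  induction hv : G.level v generalizing v K with
  | zero => simp [rootPaths_eq_singleton_empty hv, edgeVars_empty]
  | succ j ih =>
    rw [rootPaths_eq_biUnion (by omega),
      sum_biUnion (pairwiseDisjoint_image_insert_rootPaths v)]
    calc ∑ e ∈ G.inEdges v, ∑ P ∈ (G.rootPaths e.1.1).image (insert e.1),
            Y (edgeVars G P ∪ K)
        = ∑ e ∈ G.inEdges v, ∑ P ∈ G.rootPaths e.1.1,
            Y (edgeVars G P ∪ insert (G.edgeVar e) K) :=
          sum_congr rfl fun e _ => sum_image_insert_rootPaths e.2 Y K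
      _ ≤ ∑ e ∈ G.inEdges v, Y (insert (G.edgeVar e) K) := by
          refine sum_le_sum fun e he => ?_
          have := level_fst_of_mem_inEdges he
          have := card_insert_le (G.edgeVar e) K
          exact ih (by omega) (by omega)
      _ ≤ Y K := hY.sum_inEdges_le v (by omega)

end

open Classical in
/-- For any edge `e` between levels `V_j` and `V_{j+1}` and any Lasserre solution
`Ȳ ∈ Las_{t'}(K)` with `t' ≥ j`, one has `Σ_{P ∈ Q(e)} ȳ_P ≤ ȳ_{{e}}`, where `Q(e)` is
the set of root-paths whose last edge is `e`. -/
theorem sum_paths_ending_at_edge_le (G : DSTInstance V) (e : V × V) (he : e ∈ G.E)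
    (j t' : ℕ) (hj : G.level e.1 = j) (ht : j ≤ t')
    (Y : Finset (DSTVar G) → ℝ) (hY : IsLasserre (dstA G) (dstb G) t' Y) :
    ∑ P ∈ Finset.univ.filter
        (fun P : Finset (V × V) => ∃ P' : Finset (V × V), IsRPath G P' e.1 ∧ P = insert e P'),
      Y (edgeVars G P)
      ≤ Y (edgeVars G {e}) := by
  have hQ : Finset.univ.filter
      (fun P : Finset (V × V) => ∃ P' : Finset (V × V), IsRPath G P' e.1 ∧ P = insert e P')
        = (G.rootPaths e.1).image (insert e) := by
    ext P
    simp [eq_comm]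
  calc _ = ∑ P ∈ (G.rootPaths e.1).image (insert e), Y (edgeVars G P ∪ ∅) := by simp [hQ]
    _ = ∑ P ∈ G.rootPaths e.1, Y (edgeVars G P ∪ {G.edgeVar ⟨e, he⟩}) :=
        sum_image_insert_rootPaths he Y ∅
    _ ≤ Y {G.edgeVar ⟨e, he⟩} := hY.sum_rootPaths_le (by simp; omega)
    _ = Y (edgeVars G {e}) := by rw [edgeVars_singleton he]
end
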